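/- Let h > 0, c₁ > 0, c₂ > 0, M > 0, M_δ > 0 and ε₀ ∈ (0,1] with ε₀h²K ≤ 1 and εh⁴ + 4Mh(1+ε²h) + 2ε³M² ≤ M_δ/2 for all ε ∈ [0,ε₀], and K > 0 with KM_δ < c₁/2 and KM_δ < c₂. Suppose the real sequences u_n, w_n satisfy the recurrence u_{n+1} = u_n − ε²w_n√(h² − T_n) − ε³R_n, w_{n+1} = w_n + ε²u_n√(h² − T_n) + ε³S_n with |R_n|, |S_n| ≤ M, where T_n = u_n² + w_n², and that c₁ < T₀ and h² − T₀ > 2c₂. Then for every n with nε³ ≤ K (ε ∈ [0,ε₀]) one has |T_n − T₀| ≤ nε³M_δ; in particular T_n ≥ c₁/2 > 0 and h² − T_n ≥ c₂ > 0. -/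
import Mathlib


set_option maxHeartbeats 1600000 in
/-- Long-time stability of `T_n = u_n² + w_n²` along the perturbed rotation recurrence:
under the stated smallness conditions, for every `n` with `nε³ ≤ K`,
`|T_n − T₀| ≤ nε³M_δ`, and hence `T_n ≥ c₁/2 > 0` and `h² − T_n ≥ c₂ > 0`. -/
theorem Tn_long_time_estimate
    (h ε ε₀ K M M_δ c₁ c₂ : ℝ)
    (hh : 0 < h) (hc₁ : 0 < c₁) (hc₂ : 0 < c₂) (hM : 0 < M) (hMδ : 0 < M_δ)
    (hK : 0 < K)
    (hε₀ : 0 < ε₀) (hε₀1 : ε₀ ≤ 1) (hε : 0 ≤ ε) (hεε₀ : ε ≤ ε₀)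
    (hεK : ε₀ * h ^ 2 * K ≤ 1)
    (hsmall : ∀ e : ℝ, 0 ≤ e → e ≤ ε₀ →
      e * h ^ 4 + 4 * M * h * (1 + e ^ 2 * h) + 2 * e ^ 3 * M ^ 2 ≤ M_δ / 2)
    (hKM1 : K * M_δ < c₁ / 2) (hKM2 : K * M_δ < c₂)
    (u w R S : ℕ → ℝ)
    (hrec_u : ∀ n, u (n + 1) = u n
      - ε ^ 2 * w n * Real.sqrt (h ^ 2 - ((u n) ^ 2 + (w n) ^ 2)) - ε ^ 3 * R n)
    (hrec_w : ∀ n, w (n + 1) = w n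
      + ε ^ 2 * u n * Real.sqrt (h ^ 2 - ((u n) ^ 2 + (w n) ^ 2)) + ε ^ 3 * S n)
    (hR : ∀ n, |R n| ≤ M) (hS : ∀ n, |S n| ≤ M)
    (hT₀lo : c₁ < (u 0) ^ 2 + (w 0) ^ 2)
    (hT₀hi : 2 * c₂ < h ^ 2 - ((u 0) ^ 2 + (w 0) ^ 2)) :
    ∀ n : ℕ, (n : ℝ) * ε ^ 3 ≤ K →
      |((u n) ^ 2 + (w n) ^ 2) - ((u 0) ^ 2 + (w 0) ^ 2)| ≤ (n : ℝ) * ε ^ 3 * M_δ ∧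
      c₁ / 2 ≤ (u n) ^ 2 + (w n) ^ 2 ∧
      c₂ ≤ h ^ 2 - ((u n) ^ 2 + (w n) ^ 2) := by
  intro n
  induction n with
  | zero =>
    intro _
    norm_num
    constructor
    · linarith
    · linarith
  | succ n ih =>
    intro hn1
    have hε3 : (0:ℝ) ≤ ε ^ 3 := by positivity
    have hn1' : ((n : ℝ) + 1) * ε ^ 3 ≤ K := by push_cast at hn1; linarith
    have hn : (n : ℝ) * ε ^ 3 ≤ K := by
      have h2 := mul_le_mul_of_nonneg_right
        (show (n : ℝ) ≤ (n : ℝ) + 1 by linarith) hε3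
      linarith
    obtain ⟨habs, hlo, hhi⟩ := ih hn
    set Tn := (u n) ^ 2 + (w n) ^ 2 with hTn
    have hTnh : Tn ≤ h ^ 2 := by linarith
    have hTnpos : 0 < Tn := by linarith
    set s := Real.sqrt (h ^ 2 - Tn) with hs
    have hs0 : 0 ≤ s := Real.sqrt_nonneg _
    have hs2 : s ^ 2 = h ^ 2 - Tn := Real.sq_sqrt (by linarith)
    have hsh : s ≤ h := by
      rw [hs]
      calc Real.sqrt (h ^ 2 - Tn) ≤ Real.sqrt (h ^ 2) := Real.sqrt_le_sqrt (by linarith)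
        _ = h := Real.sqrt_sq hh.le
    have hub : |u n| ≤ h := by
      have h1 : Real.sqrt ((u n) ^ 2) ≤ Real.sqrt (h ^ 2) :=
        Real.sqrt_le_sqrt (by nlinarith [sq_nonneg (w n)])
      rwa [Real.sqrt_sq_eq_abs, Real.sqrt_sq hh.le] at h1
    have hwb : |w n| ≤ h := by
      have h1 : Real.sqrt ((w n) ^ 2) ≤ Real.sqrt (h ^ 2) :=
        Real.sqrt_le_sqrt (by nlinarith [sq_nonneg (u n)])
      rwa [Real.sqrt_sq_eq_abs, Real.sqrt_sq hh.le] at h1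
    have hRb := hR n
    have hSb := hS n
    have key : (u (n+1)) ^ 2 + (w (n+1)) ^ 2 - Tn
        = ε ^ 4 * (Tn * s ^ 2)
          + ε ^ 3 * (2 * (w n * S n - u n * R n)
            + 2 * ε ^ 2 * s * (w n * R n + u n * S n)
            + ε ^ 3 * ((R n) ^ 2 + (S n) ^ 2)) := by
      rw [hrec_u n, hrec_w n, ← hTn, ← hs]
      ring
    -- product bounds
    have hwS : |w n * S n| ≤ h * M := by
      rw [abs_mul]; exact mul_le_mul hwb hSb (abs_nonneg _) hh.le
    have huR : |u n * R n| ≤ h * M := by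
      rw [abs_mul]; exact mul_le_mul hub hRb (abs_nonneg _) hh.le
    have hwR : |w n * R n| ≤ h * M := by
      rw [abs_mul]; exact mul_le_mul hwb hRb (abs_nonneg _) hh.le
    have huS : |u n * S n| ≤ h * M := by
      rw [abs_mul]; exact mul_le_mul hub hSb (abs_nonneg _) hh.le
    have hR2 : (R n) ^ 2 ≤ M ^ 2 := by
      have := pow_le_pow_left₀ (abs_nonneg (R n)) hRb 2
      rwa [sq_abs] at this
    have hS2 : (S n) ^ 2 ≤ M ^ 2 := by
      have := pow_le_pow_left₀ (abs_nonneg (S n)) hSb 2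
      rwa [sq_abs] at this
    -- bound the three pieces of the bracket
    have hB1 : |2 * (w n * S n - u n * R n)| ≤ 4 * M * h := by
      rw [abs_mul, abs_two]
      have : |w n * S n - u n * R n| ≤ |w n * S n| + |u n * R n| := by
        simpa [sub_eq_add_neg, abs_neg] using abs_add_le (w n * S n) (-(u n * R n))
      linarith
    have hsumb : |w n * R n + u n * S n| ≤ 2 * h * M :=
      (abs_add_le _ _).trans (by linarith)
    have hB2 : |2 * ε ^ 2 * s * (w n * R n + u n * S n)| ≤ 4 * ε ^ 2 * M * h ^ 2 := by
      rw [abs_mul, abs_of_nonneg (by positivity : (0:ℝ) ≤ 2 * ε ^ 2 * s)]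
      have h1 : s * |w n * R n + u n * S n| ≤ h * (2 * h * M) :=
        mul_le_mul hsh hsumb (abs_nonneg _) hh.le
      have h2 : 2 * ε ^ 2 * (s * |w n * R n + u n * S n|)
          ≤ 2 * ε ^ 2 * (h * (2 * h * M)) :=
        mul_le_mul_of_nonneg_left h1 (by positivity)
      calc 2 * ε ^ 2 * s * |w n * R n + u n * S n|
          = 2 * ε ^ 2 * (s * |w n * R n + u n * S n|) := by ring
        _ ≤ 2 * ε ^ 2 * (h * (2 * h * M)) := h2
        _ = 4 * ε ^ 2 * M * h ^ 2 := by ring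
    have hB3 : |ε ^ 3 * ((R n) ^ 2 + (S n) ^ 2)| ≤ 2 * ε ^ 3 * M ^ 2 := by
      rw [abs_mul, abs_of_nonneg hε3,
        abs_of_nonneg (by positivity : (0:ℝ) ≤ (R n) ^ 2 + (S n) ^ 2)]
      have h2 : (R n) ^ 2 + (S n) ^ 2 ≤ 2 * M ^ 2 := by linarith
      calc ε ^ 3 * ((R n) ^ 2 + (S n) ^ 2) ≤ ε ^ 3 * (2 * M ^ 2) :=
            mul_le_mul_of_nonneg_left h2 hε3
        _ = 2 * ε ^ 3 * M ^ 2 := by ring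
    have hBtot : |2 * (w n * S n - u n * R n)
            + 2 * ε ^ 2 * s * (w n * R n + u n * S n)
            + ε ^ 3 * ((R n) ^ 2 + (S n) ^ 2)|
        ≤ 4 * M * h * (1 + ε ^ 2 * h) + 2 * ε ^ 3 * M ^ 2 := by
      calc |2 * (w n * S n - u n * R n)
            + 2 * ε ^ 2 * s * (w n * R n + u n * S n)
            + ε ^ 3 * ((R n) ^ 2 + (S n) ^ 2)|
          ≤ |2 * (w n * S n - u n * R n)
            + 2 * ε ^ 2 * s * (w n * R n + u n * S n)|
            + |ε ^ 3 * ((R n) ^ 2 + (S n) ^ 2)| := abs_add_le _ _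
        _ ≤ |2 * (w n * S n - u n * R n)|
            + |2 * ε ^ 2 * s * (w n * R n + u n * S n)|
            + |ε ^ 3 * ((R n) ^ 2 + (S n) ^ 2)| := by
              linarith [abs_add_le (2 * (w n * S n - u n * R n))
                (2 * ε ^ 2 * s * (w n * R n + u n * S n))]
        _ ≤ 4 * M * h + 4 * ε ^ 2 * M * h ^ 2 + 2 * ε ^ 3 * M ^ 2 := by
              linarith [hB1, hB2, hB3]
        _ = 4 * M * h * (1 + ε ^ 2 * h) + 2 * ε ^ 3 * M ^ 2 := by ring
    have hquart : ε ^ 4 * (Tn * s ^ 2) ≤ ε ^ 3 * (ε * h ^ 4) := by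
      have hs2h : s ^ 2 ≤ h ^ 2 := by rw [hs2]; linarith
      have h1 : Tn * s ^ 2 ≤ h ^ 2 * h ^ 2 :=
        mul_le_mul hTnh hs2h (sq_nonneg s) (by positivity)
      calc ε ^ 4 * (Tn * s ^ 2) ≤ ε ^ 4 * (h ^ 2 * h ^ 2) :=
            mul_le_mul_of_nonneg_left h1 (by positivity)
        _ = ε ^ 3 * (ε * h ^ 4) := by ring
    have hquart0 : (0:ℝ) ≤ ε ^ 4 * (Tn * s ^ 2) := by positivity
    have hstep : |(u (n+1)) ^ 2 + (w (n+1)) ^ 2 - Tn| ≤ ε ^ 3 * M_δ := by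
      rw [key]
      have h1 := hsmall ε hε hεε₀
      calc |ε ^ 4 * (Tn * s ^ 2)
          + ε ^ 3 * (2 * (w n * S n - u n * R n)
            + 2 * ε ^ 2 * s * (w n * R n + u n * S n)
            + ε ^ 3 * ((R n) ^ 2 + (S n) ^ 2))|
          ≤ |ε ^ 4 * (Tn * s ^ 2)|
            + |ε ^ 3 * (2 * (w n * S n - u n * R n)
            + 2 * ε ^ 2 * s * (w n * R n + u n * S n)
            + ε ^ 3 * ((R n) ^ 2 + (S n) ^ 2))| := abs_add_le _ _
        _ = ε ^ 4 * (Tn * s ^ 2)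
            + ε ^ 3 * |2 * (w n * S n - u n * R n)
            + 2 * ε ^ 2 * s * (w n * R n + u n * S n)
            + ε ^ 3 * ((R n) ^ 2 + (S n) ^ 2)| := by
              rw [abs_of_nonneg hquart0, abs_mul, abs_of_nonneg hε3]
        _ ≤ ε ^ 3 * (ε * h ^ 4)
            + ε ^ 3 * (4 * M * h * (1 + ε ^ 2 * h) + 2 * ε ^ 3 * M ^ 2) := by
              have := mul_le_mul_of_nonneg_left hBtot hε3
              linarith
        _ = ε ^ 3 * (ε * h ^ 4 + 4 * M * h * (1 + ε ^ 2 * h) + 2 * ε ^ 3 * M ^ 2) := by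
              ring
        _ ≤ ε ^ 3 * (M_δ / 2) := mul_le_mul_of_nonneg_left h1 hε3
        _ ≤ ε ^ 3 * M_δ := mul_le_mul_of_nonneg_left (by linarith) hε3
    have htri : |(u (n+1)) ^ 2 + (w (n+1)) ^ 2 - ((u 0) ^ 2 + (w 0) ^ 2)|
        ≤ ((n : ℝ) + 1) * ε ^ 3 * M_δ := by
      have := abs_sub_le ((u (n+1)) ^ 2 + (w (n+1)) ^ 2) Tn ((u 0) ^ 2 + (w 0) ^ 2)
      have hTnTn : |Tn - ((u 0) ^ 2 + (w 0) ^ 2)| ≤ (n : ℝ) * ε ^ 3 * M_δ := habs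
      calc |(u (n+1)) ^ 2 + (w (n+1)) ^ 2 - ((u 0) ^ 2 + (w 0) ^ 2)|
          ≤ |(u (n+1)) ^ 2 + (w (n+1)) ^ 2 - Tn| + |Tn - ((u 0) ^ 2 + (w 0) ^ 2)| := this
        _ ≤ ε ^ 3 * M_δ + (n : ℝ) * ε ^ 3 * M_δ := by linarith
        _ = ((n : ℝ) + 1) * ε ^ 3 * M_δ := by ring
    have hKb : ((n : ℝ) + 1) * ε ^ 3 * M_δ ≤ K * M_δ :=
      mul_le_mul_of_nonneg_right hn1' hMδ.le
    obtain ⟨hlo', hhi'⟩ := abs_le.mp htri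
    refine ⟨?_, ?_, ?_⟩
    · push_cast
      exact htri
    · linarith
    · linarith
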